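/- arXiv:2408.14365 — 2 statements merged into one kernel-verified Lean document; each statement's English description precedes it below -/
import Mathlib

section
/- For all n ≥ 0: d_{3n}(1,2;3) ≥ d_{3n}(2,1;3), d_{3n+1}(1,2;3) ≥ d_{3n+1}(2,1;3), and d_{3n+2}(1,2;3) ≤ d_{3n+2}(2,1;3), where d_n(a,b;3) is the number of partitions of n into distinct parts with more parts ≡ a (mod 3) than parts ≡ b (mod 3). -/
/-- The number of parts of the multiset `μ` congruent to `a` modulo `m`. -/
def countRes (m a : ℕ) (μ : Multiset ℕ) : ℕ :=
  (μ.filter (fun p => p % m = a % m)).card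

/-- `d_n(a, b; m)`: the number of partitions of `n` into distinct parts with
more parts `≡ a (mod m)` than parts `≡ b (mod m)`. -/
def dBias (a b m n : ℕ) : ℕ :=
  (Finset.univ.filter (fun mu : n.Partition => mu.parts.Nodup ∧
      countRes m b mu.parts < countRes m a mu.parts)).card

namespace DistinctBias
open Multiset

lemma countRes_cons (a p : ℕ) (μ : Multiset ℕ) :
    countRes 3 a (p ::ₘ μ) = (if p % 3 = a % 3 then 1 else 0) + countRes 3 a μ := by
  unfold countRes
  rw [filter_cons]
  split_ifs with h
  · simp; omega
  · simp

lemma countRes_zero (a : ℕ) : countRes 3 a (0 : Multiset ℕ) = 0 := by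
  simp [countRes]

lemma ne_zero_of_countRes (a : ℕ) {μ : Multiset ℕ} (h : 0 < countRes 3 a μ) : μ ≠ 0 := by
  rintro rfl
  simp [countRes] at h

/-- sum mod 3 is determined by residue counts. -/
lemma sum_mod3 (μ : Multiset ℕ) :
    μ.sum % 3 = (countRes 3 1 μ + 2 * countRes 3 2 μ) % 3 := by
  induction μ using Multiset.induction_on with
  | empty => simp [countRes]
  | cons p s ih =>
    rw [sum_cons, countRes_cons, countRes_cons]
    have h3 : p % 3 = 0 ∨ p % 3 = 1 ∨ p % 3 = 2 := by omega
    split_ifs with h1 h2 h2 <;> omega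

/-- the residue-swap involution: swaps parts ≡1 and ≡2 mod 3. -/
def fsw (p : ℕ) : ℕ := if p % 3 = 1 then p + 1 else if p % 3 = 2 then p - 1 else p

lemma fsw_eq0 {p : ℕ} (h : p % 3 = 0) : fsw p = p := by simp [fsw, h]
lemma fsw_eq1 {p : ℕ} (h : p % 3 = 1) : fsw p = p + 1 := by simp [fsw, h]
lemma fsw_eq2 {p : ℕ} (h : p % 3 = 2) : fsw p = p - 1 := by simp [fsw, h]

lemma fsw_fsw (p : ℕ) : fsw (fsw p) = p := by
  unfold fsw
  split_ifs <;> omega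

lemma fsw_inj : Function.Injective fsw := by
  intro a b h
  unfold fsw at h
  split_ifs at h <;> omega

lemma fsw_pos {p : ℕ} (h : 0 < p) : 0 < fsw p := by
  unfold fsw
  split_ifs <;> omega

lemma map_fsw_invol (μ : Multiset ℕ) : (μ.map fsw).map fsw = μ := by
  rw [map_map]
  have : ∀ x ∈ μ, (fsw ∘ fsw) x = id x := fun x _ => fsw_fsw x
  rw [Multiset.map_congr rfl this, map_id]

lemma map_fsw_l1 (μ : Multiset ℕ) : countRes 3 1 (μ.map fsw) = countRes 3 2 μ := by
  induction μ using Multiset.induction_on with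
  | empty => simp [countRes]
  | cons p s ih =>
    rw [map_cons, countRes_cons, countRes_cons, ih]
    have h3 : p % 3 = 0 ∨ p % 3 = 1 ∨ p % 3 = 2 := by omega
    rcases h3 with h | h | h <;>
      [rw [fsw_eq0 h]; rw [fsw_eq1 h]; rw [fsw_eq2 h]] <;> split_ifs <;> omega

lemma map_fsw_l2 (μ : Multiset ℕ) : countRes 3 2 (μ.map fsw) = countRes 3 1 μ := by
  induction μ using Multiset.induction_on with
  | empty => simp [countRes]
  | cons p s ih =>
    rw [map_cons, countRes_cons, countRes_cons, ih]
    have h3 : p % 3 = 0 ∨ p % 3 = 1 ∨ p % 3 = 2 := by omega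
    rcases h3 with h | h | h <;>
      [rw [fsw_eq0 h]; rw [fsw_eq1 h]; rw [fsw_eq2 h]] <;> split_ifs <;> omega

lemma map_fsw_sum (μ : Multiset ℕ) :
    (μ.map fsw).sum + countRes 3 2 μ = μ.sum + countRes 3 1 μ := by
  induction μ using Multiset.induction_on with
  | empty => simp [countRes]
  | cons p s ih =>
    rw [map_cons, sum_cons, sum_cons, countRes_cons, countRes_cons]
    have h3 : p % 3 = 0 ∨ p % 3 = 1 ∨ p % 3 = 2 := by omega
    rcases h3 with h | h | h <;>
      [rw [fsw_eq0 h]; rw [fsw_eq1 h]; rw [fsw_eq2 h]] <;> split_ifs <;> omega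

lemma map_fsw_nodup {μ : Multiset ℕ} (h : μ.Nodup) : (μ.map fsw).Nodup :=
  h.map fsw_inj

lemma map_fsw_mem_pos {μ : Multiset ℕ} (h : ∀ p ∈ μ, 0 < p) :
    ∀ p ∈ μ.map fsw, 0 < p := by
  intro q hq
  obtain ⟨p, hp, rfl⟩ := mem_map.mp hq
  exact fsw_pos (h p hp)

/-- shift: move 1-parts down by 3, 2-parts up by 3. Used on multisets not containing 1. -/
def sh (p : ℕ) : ℕ := if p % 3 = 1 then p - 3 else if p % 3 = 2 then p + 3 else p

def ush (p : ℕ) : ℕ := if p % 3 = 1 then p + 3 else if p % 3 = 2 then p - 3 else p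

lemma sh_eq0 {p : ℕ} (h : p % 3 = 0) : sh p = p := by simp [sh, h]
lemma sh_eq1 {p : ℕ} (h : p % 3 = 1) : sh p = p - 3 := by simp [sh, h]
lemma sh_eq2 {p : ℕ} (h : p % 3 = 2) : sh p = p + 3 := by simp [sh, h]

/-- a good multiset: positive parts, none equal to 1. -/
def Good (μ : Multiset ℕ) : Prop := ∀ p ∈ μ, 0 < p ∧ p ≠ 1

lemma ush_sh {p : ℕ} (h0 : 0 < p) (h1 : p ≠ 1) : ush (sh p) = p := by
  unfold sh ush
  split_ifs <;> omega

lemma sh_injOn {μ : Multiset ℕ} (h : Good μ) :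
    ∀ x ∈ μ, ∀ y ∈ μ, sh x = sh y → x = y := by
  intro x hx y hy hxy
  obtain ⟨hx0, hx1⟩ := h x hx
  obtain ⟨hy0, hy1⟩ := h y hy
  unfold sh at hxy
  split_ifs at hxy <;> omega

lemma map_sh_nodup {μ : Multiset ℕ} (hg : Good μ) (h : μ.Nodup) : (μ.map sh).Nodup :=
  h.map_on (sh_injOn hg)

lemma map_sh_pos {μ : Multiset ℕ} (hg : Good μ) : ∀ q ∈ μ.map sh, 0 < q := by
  intro q hq
  obtain ⟨p, hp, rfl⟩ := Multiset.mem_map.mp hq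
  obtain ⟨h0, h1⟩ := hg p hp
  unfold sh; split_ifs <;> omega

lemma map_sh_l1 {μ : Multiset ℕ} (hg : Good μ) :
    countRes 3 1 (μ.map sh) = countRes 3 1 μ := by
  induction μ using Multiset.induction_on with
  | empty => simp [countRes]
  | cons p s ih =>
    have hgp := hg p (Multiset.mem_cons_self p s)
    have hgs : Good s := fun q hq => hg q (Multiset.mem_cons_of_mem hq)
    rw [Multiset.map_cons, countRes_cons, countRes_cons, ih hgs]
    have h3 : p % 3 = 0 ∨ p % 3 = 1 ∨ p % 3 = 2 := by omega
    rcases h3 with h | h | h <;>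
      [rw [sh_eq0 h]; rw [sh_eq1 h]; rw [sh_eq2 h]] <;> split_ifs <;> omega

lemma map_sh_l2 {μ : Multiset ℕ} (hg : Good μ) :
    countRes 3 2 (μ.map sh) = countRes 3 2 μ := by
  induction μ using Multiset.induction_on with
  | empty => simp [countRes]
  | cons p s ih =>
    have hgp := hg p (Multiset.mem_cons_self p s)
    have hgs : Good s := fun q hq => hg q (Multiset.mem_cons_of_mem hq)
    rw [Multiset.map_cons, countRes_cons, countRes_cons, ih hgs]
    have h3 : p % 3 = 0 ∨ p % 3 = 1 ∨ p % 3 = 2 := by omega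
    rcases h3 with h | h | h <;>
      [rw [sh_eq0 h]; rw [sh_eq1 h]; rw [sh_eq2 h]] <;> split_ifs <;> omega

lemma map_sh_sum {μ : Multiset ℕ} (hg : Good μ) :
    (μ.map sh).sum + 3 * countRes 3 1 μ = μ.sum + 3 * countRes 3 2 μ := by
  induction μ using Multiset.induction_on with
  | empty => simp [countRes]
  | cons p s ih =>
    have hgp := hg p (Multiset.mem_cons_self p s)
    have hgs : Good s := fun q hq => hg q (Multiset.mem_cons_of_mem hq)
    have ihs := ih hgs
    rw [Multiset.map_cons, Multiset.sum_cons, Multiset.sum_cons, countRes_cons, countRes_cons]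
    have h3 : p % 3 = 0 ∨ p % 3 = 1 ∨ p % 3 = 2 := by omega
    obtain ⟨h0, h1⟩ := hgp
    rcases h3 with h | h | h <;>
      [rw [sh_eq0 h]; rw [sh_eq1 h]; rw [sh_eq2 h]] <;> split_ifs <;> omega

lemma two_not_mem_map_sh {μ : Multiset ℕ} (hg : Good μ) : 2 ∉ μ.map sh := by
  intro hmem
  obtain ⟨p, hp, hsh⟩ := Multiset.mem_map.mp hmem
  obtain ⟨h0, h1⟩ := hg p hp
  unfold sh at hsh
  split_ifs at hsh <;> omega

lemma map_ush_sh {μ : Multiset ℕ} (hg : Good μ) : (μ.map sh).map ush = μ := by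
  rw [Multiset.map_map]
  have : ∀ x ∈ μ, (ush ∘ sh) x = id x := by
    intro x hx
    obtain ⟨h0, h1⟩ := hg x hx
    exact ush_sh h0 h1
  rw [Multiset.map_congr rfl this, Multiset.map_id]

/-- The pentagonal step Ψ: bijection from {bias j, sum m} to {bias j-1, sum m-3j+2}. -/
def psiStep (μ : Multiset ℕ) : Multiset ℕ :=
  if 1 ∈ μ then (μ.erase 1).map sh else 2 ::ₘ μ.map sh

def psiInv (ν : Multiset ℕ) : Multiset ℕ :=
  if 2 ∈ ν then (ν.erase 2).map ush else 1 ::ₘ ν.map ush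

section PsiLemmas

variable {μ : Multiset ℕ} (hnd : μ.Nodup) (hpos : ∀ p ∈ μ, 0 < p)

lemma good_erase_one (hnd : μ.Nodup) (hpos : ∀ p ∈ μ, 0 < p) : Good (μ.erase 1) := by
  intro p hp
  refine ⟨hpos p (Multiset.mem_of_mem_erase hp), ?_⟩
  rintro rfl
  exact hnd.notMem_erase hp

lemma good_of_not_one (h1 : 1 ∉ μ) (hpos : ∀ p ∈ μ, 0 < p) : Good μ := by
  intro p hp
  exact ⟨hpos p hp, by rintro rfl; exact h1 hp⟩

lemma psiStep_nodup (hnd : μ.Nodup) (hpos : ∀ p ∈ μ, 0 < p) : (psiStep μ).Nodup := by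
  unfold psiStep
  split_ifs with h1
  · exact map_sh_nodup (good_erase_one hnd hpos) (hnd.erase 1)
  · exact (map_sh_nodup (good_of_not_one h1 hpos) hnd).cons
      (two_not_mem_map_sh (good_of_not_one h1 hpos))

lemma psiStep_pos (hnd : μ.Nodup) (hpos : ∀ p ∈ μ, 0 < p) : ∀ q ∈ psiStep μ, 0 < q := by
  unfold psiStep
  split_ifs with h1
  · exact map_sh_pos (good_erase_one hnd hpos)
  · intro q hq
    rcases Multiset.mem_cons.mp hq with rfl | hq
    · omega
    · exact map_sh_pos (good_of_not_one h1 hpos) q hq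

lemma psiStep_sum (hnd : μ.Nodup) (hpos : ∀ p ∈ μ, 0 < p) :
    (psiStep μ).sum + 3 * countRes 3 1 μ = μ.sum + 2 + 3 * countRes 3 2 μ := by
  unfold psiStep
  split_ifs with h1
  · have hc := Multiset.cons_erase h1
    have hsum : μ.sum = 1 + (μ.erase 1).sum := by
      conv_lhs => rw [← hc]
      rw [Multiset.sum_cons]
    have hl1 : countRes 3 1 μ = 1 + countRes 3 1 (μ.erase 1) := by
      conv_lhs => rw [← hc]
      rw [countRes_cons]; norm_num
    have hl2 : countRes 3 2 μ = countRes 3 2 (μ.erase 1) := by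
      conv_lhs => rw [← hc]
      rw [countRes_cons]; norm_num
    have := map_sh_sum (good_erase_one hnd hpos)
    omega
  · have := map_sh_sum (good_of_not_one h1 hpos)
    rw [Multiset.sum_cons]
    omega

lemma psiStep_bias (hnd : μ.Nodup) (hpos : ∀ p ∈ μ, 0 < p) :
    countRes 3 1 (psiStep μ) + countRes 3 2 μ + 1
      = countRes 3 1 μ + countRes 3 2 (psiStep μ) := by
  unfold psiStep
  split_ifs with h1
  · have hc := Multiset.cons_erase h1
    have hl1 : countRes 3 1 μ = 1 + countRes 3 1 (μ.erase 1) := by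
      conv_lhs => rw [← hc]
      rw [countRes_cons]; norm_num
    have hl2 : countRes 3 2 μ = countRes 3 2 (μ.erase 1) := by
      conv_lhs => rw [← hc]
      rw [countRes_cons]; norm_num
    have e1 := map_sh_l1 (good_erase_one hnd hpos)
    have e2 := map_sh_l2 (good_erase_one hnd hpos)
    omega
  · have e1 := map_sh_l1 (good_of_not_one h1 hpos)
    have e2 := map_sh_l2 (good_of_not_one h1 hpos)
    rw [countRes_cons, countRes_cons]
    norm_num
    omega

lemma psiInv_psiStep (hnd : μ.Nodup) (hpos : ∀ p ∈ μ, 0 < p) : psiInv (psiStep μ) = μ := by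
  unfold psiStep
  split_ifs with h1
  · have hg := good_erase_one hnd hpos
    unfold psiInv
    rw [if_neg (two_not_mem_map_sh hg)]
    rw [Multiset.map_map]
    have : ∀ x ∈ μ.erase 1, (ush ∘ sh) x = id x := by
      intro x hx
      obtain ⟨h0, hne⟩ := hg x hx
      exact ush_sh h0 hne
    rw [Multiset.map_congr rfl this, Multiset.map_id]
    exact Multiset.cons_erase h1
  · have hg := good_of_not_one h1 hpos
    unfold psiInv
    rw [if_pos (Multiset.mem_cons_self 2 _), Multiset.erase_cons_head, map_ush_sh hg]

end PsiLemmas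

section AddMax

lemma sup_mem {ν : Multiset ℕ} (h : ν ≠ 0) : ν.sup ∈ ν := by
  induction ν using Multiset.induction_on with
  | empty => exact absurd rfl h
  | cons a s ih =>
    rw [Multiset.sup_cons]
    by_cases hs : s = 0
    · subst hs
      simp
    · rcases le_total a s.sup with hle | hle
      · rw [sup_eq_right.mpr hle]
        exact Multiset.mem_cons_of_mem (ih hs)
      · rw [sup_eq_left.mpr hle]
        exact Multiset.mem_cons_self a s

lemma le_sup_of_mem {ν : Multiset ℕ} {a : ℕ} (h : a ∈ ν) : a ≤ ν.sup :=
  Multiset.le_sup h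

/-- add t to the largest part. -/
def addMax (ν : Multiset ℕ) (t : ℕ) : Multiset ℕ := (ν.sup + t) ::ₘ ν.erase ν.sup

def subMax (ν : Multiset ℕ) (t : ℕ) : Multiset ℕ := (ν.sup - t) ::ₘ ν.erase ν.sup

variable {ν : Multiset ℕ} {t : ℕ}

lemma addMax_sum (h : ν ≠ 0) : (addMax ν t).sum = ν.sum + t := by
  have hc := Multiset.cons_erase (sup_mem h)
  have hs : ν.sum = ν.sup + (ν.erase ν.sup).sum := by
    conv_lhs => rw [← hc]
    rw [Multiset.sum_cons]
  unfold addMax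
  rw [Multiset.sum_cons]
  omega

lemma addMax_countRes (h : ν ≠ 0) (ht : t % 3 = 0) (a : ℕ) :
    countRes 3 a (addMax ν t) = countRes 3 a ν := by
  have hc := Multiset.cons_erase (sup_mem h)
  have h2 : countRes 3 a ν = (if ν.sup % 3 = a % 3 then 1 else 0) + countRes 3 a (ν.erase ν.sup) := by
    conv_lhs => rw [← hc]
    rw [countRes_cons]
  unfold addMax
  rw [countRes_cons]
  have h3 : (ν.sup + t) % 3 = ν.sup % 3 := by omega
  rw [h3]
  omega

lemma addMax_nodup (h : ν ≠ 0) (hnd : ν.Nodup) : (addMax ν t).Nodup := by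
  unfold addMax
  refine ((hnd.erase _)).cons ?_
  intro hmem
  rcases Nat.eq_zero_or_pos t with rfl | ht
  · rw [Nat.add_zero] at hmem
    exact hnd.notMem_erase hmem
  · have := le_sup_of_mem (Multiset.mem_of_mem_erase hmem)
    omega

lemma addMax_pos (h : ν ≠ 0) (hpos : ∀ p ∈ ν, 0 < p) : ∀ p ∈ addMax ν t, 0 < p := by
  intro p hp
  rcases Multiset.mem_cons.mp hp with rfl | hp
  · have := hpos _ (sup_mem h)
    omega
  · exact hpos p (Multiset.mem_of_mem_erase hp)

lemma addMax_sup (h : ν ≠ 0) : (addMax ν t).sup = ν.sup + t := by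
  unfold addMax
  rw [Multiset.sup_cons]
  have herase : (ν.erase ν.sup).sup ≤ ν.sup + t := by
    rw [Multiset.sup_le]
    intro b hb
    have := le_sup_of_mem (Multiset.mem_of_mem_erase hb)
    omega
  exact sup_eq_left.mpr herase

lemma subMax_addMax (h : ν ≠ 0) : subMax (addMax ν t) t = ν := by
  unfold subMax
  rw [addMax_sup h]
  have herase : (addMax ν t).erase (ν.sup + t) = ν.erase ν.sup := by
    unfold addMax
    exact Multiset.erase_cons_head _ _
  rw [herase, Nat.add_sub_cancel]
  exact Multiset.cons_erase (sup_mem h)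

lemma addMax_ne_zero : addMax ν t ≠ 0 := by
  unfold addMax
  exact Multiset.cons_ne_zero

end AddMax

section Maps

/-- Case n ≡ 0 mod 3 : from {ℓ₁ < ℓ₂} to {ℓ₂ < ℓ₁}. -/
def phi0 (μ : Multiset ℕ) : Multiset ℕ :=
  addMax (μ.map fsw) (countRes 3 2 μ - countRes 3 1 μ)

def phi0inv (ν : Multiset ℕ) : Multiset ℕ :=
  (subMax ν (countRes 3 1 ν - countRes 3 2 ν)).map fsw

/-- Case n ≡ 1 mod 3 : from {ℓ₁ < ℓ₂} to {ℓ₂ < ℓ₁}. -/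
def phi1 (μ : Multiset ℕ) : Multiset ℕ :=
  addMax (psiStep (μ.map fsw)) (4 * (countRes 3 2 μ - countRes 3 1 μ) - 2)

def phi1inv (ν : Multiset ℕ) : Multiset ℕ :=
  (psiInv (subMax ν (4 * ((countRes 3 1 ν - countRes 3 2 ν) + 1) - 2))).map fsw

/-- Case n ≡ 2 mod 3 : from {ℓ₂ < ℓ₁} to {ℓ₁ < ℓ₂}. -/
def phi2 (μ : Multiset ℕ) : Multiset ℕ :=
  (addMax (psiStep μ) (2 * (countRes 3 1 μ - countRes 3 2 μ) - 1)).map fsw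

def phi2inv (ν : Multiset ℕ) : Multiset ℕ :=
  psiInv (subMax (ν.map fsw) (2 * ((countRes 3 2 ν - countRes 3 1 ν) + 1) - 1))

variable {μ : Multiset ℕ}

lemma phi0_spec (hnd : μ.Nodup) (hpos : ∀ p ∈ μ, 0 < p) (hm : μ.sum % 3 = 0)
    (hlt : countRes 3 1 μ < countRes 3 2 μ) :
    (phi0 μ).Nodup ∧ (∀ p ∈ phi0 μ, 0 < p) ∧ (phi0 μ).sum = μ.sum ∧
      countRes 3 2 (phi0 μ) < countRes 3 1 (phi0 μ) ∧ phi0inv (phi0 μ) = μ := by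
  set k := countRes 3 2 μ - countRes 3 1 μ with hk
  have hsm := sum_mod3 μ
  have hk3 : k % 3 = 0 := by omega
  have hne : μ ≠ 0 := ne_zero_of_countRes 2 (by omega)
  have hσne : μ.map fsw ≠ 0 := by
    rw [Ne, Multiset.map_eq_zero]; exact hne
  have hσnd := map_fsw_nodup hnd
  have hσpos := map_fsw_mem_pos hpos
  have hσ1 := map_fsw_l1 μ
  have hσ2 := map_fsw_l2 μ
  have hσs := map_fsw_sum μ
  have hc1 : countRes 3 1 (phi0 μ) = countRes 3 2 μ := by
    rw [phi0, addMax_countRes hσne hk3 1, hσ1]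
  have hc2 : countRes 3 2 (phi0 μ) = countRes 3 1 μ := by
    rw [phi0, addMax_countRes hσne hk3 2, hσ2]
  refine ⟨addMax_nodup hσne hσnd, addMax_pos hσne hσpos, ?_, by omega, ?_⟩
  · rw [phi0, addMax_sum hσne]
    omega
  · rw [phi0inv, hc1, hc2]
    have : countRes 3 2 μ - countRes 3 1 μ = k := rfl
    rw [this, phi0, subMax_addMax hσne, map_fsw_invol]

lemma phi1_spec (hnd : μ.Nodup) (hpos : ∀ p ∈ μ, 0 < p) (hm : μ.sum % 3 = 1)
    (hlt : countRes 3 1 μ < countRes 3 2 μ) :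
    (phi1 μ).Nodup ∧ (∀ p ∈ phi1 μ, 0 < p) ∧ (phi1 μ).sum = μ.sum ∧
      countRes 3 2 (phi1 μ) < countRes 3 1 (phi1 μ) ∧ phi1inv (phi1 μ) = μ := by
  set k := countRes 3 2 μ - countRes 3 1 μ with hk
  have hsm := sum_mod3 μ
  have hk3 : k % 3 = 2 := by omega
  have hne : μ ≠ 0 := ne_zero_of_countRes 2 (by omega)
  have hσne : μ.map fsw ≠ 0 := by
    rw [Ne, Multiset.map_eq_zero]; exact hne
  have hσnd := map_fsw_nodup hnd
  have hσpos := map_fsw_mem_pos hpos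
  have hσ1 := map_fsw_l1 μ
  have hσ2 := map_fsw_l2 μ
  have hσs := map_fsw_sum μ
  have hψnd := psiStep_nodup hσnd hσpos
  have hψpos := psiStep_pos hσnd hσpos
  have hψs := psiStep_sum hσnd hσpos
  have hψb := psiStep_bias hσnd hσpos
  have hψne : psiStep (μ.map fsw) ≠ 0 := ne_zero_of_countRes 1 (by omega)
  have ht3 : (4 * k - 2) % 3 = 0 := by omega
  have hc1 : countRes 3 1 (phi1 μ) = countRes 3 1 (psiStep (μ.map fsw)) := by
    rw [phi1, addMax_countRes hψne ht3 1]
  have hc2 : countRes 3 2 (phi1 μ) = countRes 3 2 (psiStep (μ.map fsw)) := by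
    rw [phi1, addMax_countRes hψne ht3 2]
  refine ⟨addMax_nodup hψne hψnd, addMax_pos hψne hψpos, ?_, by omega, ?_⟩
  · rw [phi1, addMax_sum hψne]
    omega
  · rw [phi1inv, hc1, hc2]
    have he : 4 * ((countRes 3 1 (psiStep (μ.map fsw)) -
        countRes 3 2 (psiStep (μ.map fsw))) + 1) - 2 = 4 * k - 2 := by omega
    rw [he, phi1, subMax_addMax hψne, psiInv_psiStep hσnd hσpos, map_fsw_invol]

lemma phi2_spec (hnd : μ.Nodup) (hpos : ∀ p ∈ μ, 0 < p) (hm : μ.sum % 3 = 2)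
    (hlt : countRes 3 2 μ < countRes 3 1 μ) :
    (phi2 μ).Nodup ∧ (∀ p ∈ phi2 μ, 0 < p) ∧ (phi2 μ).sum = μ.sum ∧
      countRes 3 1 (phi2 μ) < countRes 3 2 (phi2 μ) ∧ phi2inv (phi2 μ) = μ := by
  set k := countRes 3 1 μ - countRes 3 2 μ with hk
  have hsm := sum_mod3 μ
  have hk3 : k % 3 = 2 := by omega
  have hψnd := psiStep_nodup hnd hpos
  have hψpos := psiStep_pos hnd hpos
  have hψs := psiStep_sum hnd hpos
  have hψb := psiStep_bias hnd hpos
  have hψne : psiStep μ ≠ 0 := ne_zero_of_countRes 1 (by omega)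
  have ht3 : (2 * k - 1) % 3 = 0 := by omega
  set χ := addMax (psiStep μ) (2 * k - 1) with hχ
  have hχnd : χ.Nodup := addMax_nodup hψne hψnd
  have hχpos : ∀ p ∈ χ, 0 < p := addMax_pos hψne hψpos
  have hχs : χ.sum = (psiStep μ).sum + (2 * k - 1) := addMax_sum hψne
  have hχ1 : countRes 3 1 χ = countRes 3 1 (psiStep μ) := addMax_countRes hψne ht3 1
  have hχ2 : countRes 3 2 χ = countRes 3 2 (psiStep μ) := addMax_countRes hψne ht3 2
  have hc1 : countRes 3 1 (phi2 μ) = countRes 3 2 χ := by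
    rw [phi2, ← hχ, map_fsw_l1]
  have hc2 : countRes 3 2 (phi2 μ) = countRes 3 1 χ := by
    rw [phi2, ← hχ, map_fsw_l2]
  have hχsum := map_fsw_sum χ
  refine ⟨map_fsw_nodup hχnd, map_fsw_mem_pos hχpos, ?_, by omega, ?_⟩
  · have : (phi2 μ).sum = (χ.map fsw).sum := by rw [phi2, ← hχ]
    omega
  · rw [phi2inv, hc1, hc2]
    have he : 2 * ((countRes 3 1 χ - countRes 3 2 χ) + 1) - 1 = 2 * k - 1 := by omega
    rw [he]
    have hmapback : (phi2 μ).map fsw = χ := by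
      rw [phi2, ← hχ, map_fsw_invol]
    rw [hmapback, hχ, subMax_addMax hψne, psiInv_psiStep hnd hpos]

end Maps

section Final

lemma dBias_le_of_map (n : ℕ) (Φ Φinv : Multiset ℕ → Multiset ℕ) (a b : ℕ)
    (hspec : ∀ μ : Multiset ℕ, μ.Nodup → (∀ p ∈ μ, 0 < p) → μ.sum = n →
      countRes 3 b μ < countRes 3 a μ →
      (Φ μ).Nodup ∧ (∀ p ∈ Φ μ, 0 < p) ∧ (Φ μ).sum = μ.sum ∧
        countRes 3 a (Φ μ) < countRes 3 b (Φ μ) ∧ Φinv (Φ μ) = μ) :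
    dBias a b 3 n ≤ dBias b a 3 n := by
  unfold dBias
  set F : n.Partition → n.Partition := fun mu =>
    if h : mu.parts.Nodup ∧ countRes 3 b mu.parts < countRes 3 a mu.parts then
      Nat.Partition.mk (Φ mu.parts)
        (fun {i} hi =>
          (hspec mu.parts h.1 (fun p hp => mu.parts_pos hp) mu.parts_sum h.2).2.1 i hi)
        (by
          rw [(hspec mu.parts h.1 (fun p hp => mu.parts_pos hp) mu.parts_sum h.2).2.2.1,
            mu.parts_sum])
    else mu with hF
  apply Finset.card_le_card_of_injOn F
  · intro mu hmu
    rw [Finset.mem_coe, Finset.mem_filter] at hmu ⊢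
    obtain ⟨-, hcond⟩ := hmu
    have spec := hspec mu.parts hcond.1 (fun p hp => mu.parts_pos hp) mu.parts_sum hcond.2
    refine ⟨Finset.mem_univ _, ?_⟩
    rw [hF]
    simp only [dif_pos hcond]
    exact ⟨spec.1, spec.2.2.2.1⟩
  · intro mu1 h1 mu2 h2 heq
    rw [Finset.mem_coe, Finset.mem_filter] at h1 h2
    obtain ⟨-, hc1⟩ := h1
    obtain ⟨-, hc2⟩ := h2
    have spec1 := hspec mu1.parts hc1.1 (fun p hp => mu1.parts_pos hp) mu1.parts_sum hc1.2
    have spec2 := hspec mu2.parts hc2.1 (fun p hp => mu2.parts_pos hp) mu2.parts_sum hc2.2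
    rw [hF] at heq
    simp only [dif_pos hc1, dif_pos hc2] at heq
    have hparts : Φ mu1.parts = Φ mu2.parts := congrArg Nat.Partition.parts heq
    have : mu1.parts = mu2.parts := by
      rw [← spec1.2.2.2.2, ← spec2.2.2.2.2, hparts]
    exact Nat.Partition.ext this

lemma case0 (n : ℕ) (hn : n % 3 = 0) : dBias 2 1 3 n ≤ dBias 1 2 3 n :=
  dBias_le_of_map n phi0 phi0inv 2 1 (fun μ hnd hpos hsum hlt =>
    phi0_spec hnd hpos (by rw [hsum]; exact hn) hlt)

lemma case1 (n : ℕ) (hn : n % 3 = 1) : dBias 2 1 3 n ≤ dBias 1 2 3 n :=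
  dBias_le_of_map n phi1 phi1inv 2 1 (fun μ hnd hpos hsum hlt =>
    phi1_spec hnd hpos (by rw [hsum]; exact hn) hlt)

lemma case2 (n : ℕ) (hn : n % 3 = 2) : dBias 1 2 3 n ≤ dBias 2 1 3 n :=
  dBias_le_of_map n phi2 phi2inv 1 2 (fun μ hnd hpos hsum hlt =>
    phi2_spec hnd hpos (by rw [hsum]; exact hn) hlt)

end Final

end DistinctBias

/-- For all `n ≥ 0`: `d_{3n}(1,2;3) ≥ d_{3n}(2,1;3)`,
`d_{3n+1}(1,2;3) ≥ d_{3n+1}(2,1;3)` and `d_{3n+2}(1,2;3) ≤ d_{3n+2}(2,1;3)`. -/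
theorem distinct_bias_mod_three (n : ℕ) :
    dBias 2 1 3 (3 * n) ≤ dBias 1 2 3 (3 * n) ∧
    dBias 2 1 3 (3 * n + 1) ≤ dBias 1 2 3 (3 * n + 1) ∧
    dBias 1 2 3 (3 * n + 2) ≤ dBias 2 1 3 (3 * n + 2) :=
  ⟨DistinctBias.case0 _ (by omega), DistinctBias.case1 _ (by omega),
    DistinctBias.case2 _ (by omega)⟩
end

section
/- For all n ≥ 0, the number of partitions of n into distinct parts with more parts ≡ 1 (mod 4) than parts ≡ 3 (mod 4) is at least the number of partitions of n into distinct parts with more parts ≡ 3 (mod 4) than parts ≡ 1 (mod 4). -/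
namespace DBias
open Multiset

def flipO (p : ℕ) : ℕ := if p % 4 = 1 then p + 2 else p - 2

lemma flip_odd {p : ℕ} (h : p % 2 = 1) : flipO p % 2 = 1 := by
  unfold flipO; split_ifs <;> omega

lemma flip_flip {p : ℕ} (h : p % 2 = 1) : flipO (flipO p) = p := by
  unfold flipO; split_ifs <;> omega

lemma flip_pos {p : ℕ} (h : p % 2 = 1) : 0 < flipO p := by
  unfold flipO; split_ifs <;> omega

lemma flip_mod1 {p : ℕ} (h : p % 2 = 1) : flipO p % 4 = 1 ↔ p % 4 = 3 := by
  unfold flipO; split_ifs <;> omega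

lemma flip_mod3 {p : ℕ} (h : p % 2 = 1) : flipO p % 4 = 3 ↔ p % 4 = 1 := by
  unfold flipO; split_ifs <;> omega

def oddsM (s : Multiset ℕ) : Multiset ℕ := s.filter (fun p => p % 2 = 1)
def evensM (s : Multiset ℕ) : Multiset ℕ := s.filter (fun p => ¬ p % 2 = 1)
def dM (s : Multiset ℕ) : ℕ := countRes 4 3 s - countRes 4 1 s

def TM (s : Multiset ℕ) : Multiset ℕ :=
  (oddsM s).map flipO +
    ((evensM s).erase (evensM s).sup).cons ((evensM s).sup + 2 * dM s)

lemma mem_odds {s : Multiset ℕ} {x : ℕ} (h : x ∈ oddsM s) : x ∈ s ∧ x % 2 = 1 := by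
  rw [oddsM, Multiset.mem_filter] at h; exact h

lemma mem_evens {s : Multiset ℕ} {x : ℕ} (h : x ∈ evensM s) : x ∈ s ∧ x % 2 = 0 := by
  rw [evensM, Multiset.mem_filter] at h
  exact ⟨h.1, by omega⟩

lemma sup_mem {s : Multiset ℕ} (h : s ≠ 0) : s.sup ∈ s := by
  induction s using Multiset.induction_on with
  | empty => simp at h
  | cons a t ih =>
    rw [Multiset.sup_cons]
    rcases eq_or_ne t 0 with rfl | ht
    · simp
    · rcases le_total a t.sup with h' | h'
      · rw [sup_eq_right.mpr h']; exact Multiset.mem_cons_of_mem (ih ht)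
      · rw [sup_eq_left.mpr h']; exact Multiset.mem_cons_self a t

lemma evens_sup_even (s : Multiset ℕ) : (evensM s).sup % 2 = 0 := by
  rcases eq_or_ne (evensM s) 0 with h | h
  · rw [h]; rfl
  · exact (mem_evens (sup_mem h)).2

lemma countRes1_eq (s : Multiset ℕ) :
    countRes 4 1 s = s.countP (fun p => p % 4 = 1) := by
  simp [countRes, Multiset.countP_eq_card_filter]

lemma countRes3_eq (s : Multiset ℕ) :
    countRes 4 3 s = s.countP (fun p => p % 4 = 3) := by
  simp [countRes, Multiset.countP_eq_card_filter]

lemma countP1_odds (s : Multiset ℕ) :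
    (oddsM s).countP (fun p => p % 4 = 1) = countRes 4 1 s := by
  rw [countRes1_eq, oddsM, Multiset.countP_filter]
  exact Multiset.countP_congr rfl (fun x _ => propext (by omega))

lemma countP3_odds (s : Multiset ℕ) :
    (oddsM s).countP (fun p => p % 4 = 3) = countRes 4 3 s := by
  rw [countRes3_eq, oddsM, Multiset.countP_filter]
  exact Multiset.countP_congr rfl (fun x _ => propext (by omega))

lemma sum_map_flip (s : Multiset ℕ) (h : ∀ x ∈ s, x % 2 = 1) :
    (s.map flipO).sum + 2 * s.countP (fun p => p % 4 = 3)
      = s.sum + 2 * s.countP (fun p => p % 4 = 1) := by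
  induction s using Multiset.induction_on with
  | empty => simp
  | cons a t ih =>
    have ha := h a (Multiset.mem_cons_self a t)
    have ih' := ih (fun x hx => h x (Multiset.mem_cons_of_mem hx))
    simp only [Multiset.map_cons, Multiset.sum_cons, Multiset.countP_cons]
    rw [show flipO a = if a % 4 = 1 then a + 2 else a - 2 from rfl]
    split_ifs <;> omega

/-- membership description of `TM s` -/
lemma mem_TM {s : Multiset ℕ} {x : ℕ} (hx : x ∈ TM s) :
    (∃ y ∈ oddsM s, x = flipO y) ∨ x = (evensM s).sup + 2 * dM s ∨
      x ∈ (evensM s).erase (evensM s).sup := by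
  rw [TM, Multiset.mem_add] at hx
  rcases hx with hx | hx
  · left; rcases Multiset.mem_map.mp hx with ⟨y, hy, hxy⟩; exact ⟨y, hy, hxy.symm⟩
  · right; rcases Multiset.mem_cons.mp hx with h | h
    · exact Or.inl h
    · exact Or.inr h

lemma TM_odds (s : Multiset ℕ) :
    (TM s).filter (fun p => p % 2 = 1) = (oddsM s).map flipO := by
  rw [TM, Multiset.filter_add]
  have h1 : ((oddsM s).map flipO).filter (fun p => p % 2 = 1) = (oddsM s).map flipO := by
    rw [Multiset.filter_eq_self]
    intro a ha
    rcases Multiset.mem_map.mp ha with ⟨y, hy, rfl⟩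
    exact flip_odd (mem_odds hy).2
  have h2 : (((evensM s).erase (evensM s).sup).cons ((evensM s).sup + 2 * dM s)).filter
      (fun p => p % 2 = 1) = 0 := by
    rw [Multiset.filter_eq_nil]
    intro a ha
    rcases Multiset.mem_cons.mp ha with rfl | h
    · have := evens_sup_even s; omega
    · have := (mem_evens (Multiset.mem_of_mem_erase h)).2; omega
  rw [h1, h2, add_zero]

lemma TM_evens (s : Multiset ℕ) :
    (TM s).filter (fun p => ¬ p % 2 = 1)
      = ((evensM s).erase (evensM s).sup).cons ((evensM s).sup + 2 * dM s) := by
  rw [TM, Multiset.filter_add]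
  have h1 : ((oddsM s).map flipO).filter (fun p => ¬ p % 2 = 1) = 0 := by
    rw [Multiset.filter_eq_nil]
    intro a ha
    rcases Multiset.mem_map.mp ha with ⟨y, hy, rfl⟩
    have := flip_odd (mem_odds hy).2; omega
  have h2 : (((evensM s).erase (evensM s).sup).cons ((evensM s).sup + 2 * dM s)).filter
      (fun p => ¬ p % 2 = 1) = ((evensM s).erase (evensM s).sup).cons ((evensM s).sup + 2 * dM s) := by
    rw [Multiset.filter_eq_self]
    intro a ha
    rcases Multiset.mem_cons.mp ha with rfl | h
    · have := evens_sup_even s; omega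
    · have := (mem_evens (Multiset.mem_of_mem_erase h)).2; omega
  rw [h1, h2, zero_add]

lemma TM_count1 (s : Multiset ℕ) : countRes 4 1 (TM s) = countRes 4 3 s := by
  rw [countRes1_eq, TM, Multiset.countP_add]
  have h2 : (((evensM s).erase (evensM s).sup).cons ((evensM s).sup + 2 * dM s)).countP
      (fun p => p % 4 = 1) = 0 := by
    rw [Multiset.countP_eq_zero]
    intro a ha
    rcases Multiset.mem_cons.mp ha with rfl | h
    · have := evens_sup_even s; omega
    · have := (mem_evens (Multiset.mem_of_mem_erase h)).2; omega
  rw [h2, add_zero, Multiset.countP_map, ← Multiset.countP_eq_card_filter,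
      ← countP3_odds s]
  refine Multiset.countP_congr rfl (fun x hx => ?_)
  have hodd := (mem_odds hx).2
  simp only [eq_iff_iff]
  exact flip_mod1 hodd

lemma TM_count3 (s : Multiset ℕ) : countRes 4 3 (TM s) = countRes 4 1 s := by
  rw [countRes3_eq, TM, Multiset.countP_add]
  have h2 : (((evensM s).erase (evensM s).sup).cons ((evensM s).sup + 2 * dM s)).countP
      (fun p => p % 4 = 3) = 0 := by
    rw [Multiset.countP_eq_zero]
    intro a ha
    rcases Multiset.mem_cons.mp ha with rfl | h
    · have := evens_sup_even s; omega
    · have := (mem_evens (Multiset.mem_of_mem_erase h)).2; omega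
  rw [h2, add_zero, Multiset.countP_map, ← Multiset.countP_eq_card_filter,
      ← countP1_odds s]
  refine Multiset.countP_congr rfl (fun x hx => ?_)
  have hodd := (mem_odds hx).2
  simp only [eq_iff_iff]
  exact flip_mod3 hodd

lemma evens_sum_erase (s : Multiset ℕ) (hpos : 0 ∉ s) :
    ((evensM s).erase (evensM s).sup).sum + (evensM s).sup = (evensM s).sum := by
  rcases eq_or_ne (evensM s) 0 with h | h
  · rw [h]; simp [Multiset.sup_zero]
  · have hm := sup_mem h
    conv_rhs => rw [← Multiset.cons_erase hm]
    rw [Multiset.sum_cons]; ring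

lemma odds_evens_sum (s : Multiset ℕ) : (oddsM s).sum + (evensM s).sum = s.sum := by
  rw [oddsM, evensM, ← Multiset.sum_add, Multiset.filter_add_not]

lemma TM_sum (s : Multiset ℕ) (hpos : 0 ∉ s)
    (hlt : countRes 4 1 s < countRes 4 3 s) : (TM s).sum = s.sum := by
  have hd : countRes 4 1 s + dM s = countRes 4 3 s := by
    rw [dM]; omega
  have h1 := sum_map_flip (oddsM s) (fun x hx => (mem_odds hx).2)
  rw [countP1_odds, countP3_odds] at h1
  have h2 := evens_sum_erase s hpos
  have h3 := odds_evens_sum s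
  rw [TM, Multiset.sum_add, Multiset.sum_cons]
  omega

lemma TM_pos (s : Multiset ℕ) (hpos : 0 ∉ s)
    (hlt : countRes 4 1 s < countRes 4 3 s) : 0 ∉ TM s := by
  intro h0
  rcases mem_TM h0 with ⟨y, hy, hxy⟩ | h | h
  · have := flip_pos (mem_odds hy).2; omega
  · have : 0 < dM s := by rw [dM]; omega
    omega
  · exact hpos (mem_evens (Multiset.mem_of_mem_erase h)).1

lemma TM_nodup (s : Multiset ℕ) (hnd : s.Nodup)
    (hlt : countRes 4 1 s < countRes 4 3 s) : (TM s).Nodup := by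
  have hdpos : 0 < dM s := by rw [dM]; omega
  rw [TM, Multiset.nodup_add]
  have hoddnd : (oddsM s).Nodup := hnd.filter _
  have hevnd : (evensM s).Nodup := hnd.filter _
  refine ⟨?_, ?_, ?_⟩
  · refine hoddnd.map_on (fun x hx y hy hxy => ?_)
    have := flip_flip (mem_odds hx).2
    rw [hxy, flip_flip (mem_odds hy).2] at this
    exact this.symm
  · rw [Multiset.nodup_cons]
    refine ⟨fun hmem => ?_, hevnd.erase _⟩
    have hle := Multiset.le_sup (Multiset.mem_of_mem_erase hmem)
    omega
  · rw [Multiset.disjoint_left]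
    intro a ha hb
    rcases Multiset.mem_map.mp ha with ⟨y, hy, rfl⟩
    have h1 := flip_odd (mem_odds hy).2
    rcases Multiset.mem_cons.mp hb with h | h
    · have := evens_sup_even s; omega
    · have := (mem_evens (Multiset.mem_of_mem_erase h)).2; omega

lemma TM_inj (s t : Multiset ℕ) (hs : s.Nodup) (ht : t.Nodup)
    (hs0 : 0 ∉ s) (ht0 : 0 ∉ t)
    (hls : countRes 4 1 s < countRes 4 3 s)
    (hlt : countRes 4 1 t < countRes 4 3 t)
    (heq : TM s = TM t) : s = t := by
  -- counts agree
  have hc3 : countRes 4 3 s = countRes 4 3 t := by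
    have := TM_count1 s; rw [heq, TM_count1 t] at this; exact this.symm
  have hc1 : countRes 4 1 s = countRes 4 1 t := by
    have := TM_count3 s; rw [heq, TM_count3 t] at this; exact this.symm
  have hd : dM s = dM t := by rw [dM, dM, hc1, hc3]
  -- odds agree
  have hodds : oddsM s = oddsM t := by
    have h1 : (oddsM s).map flipO = (oddsM t).map flipO := by
      rw [← TM_odds, ← TM_odds, heq]
    have h2 := congrArg (Multiset.map flipO) h1
    rw [Multiset.map_map, Multiset.map_map] at h2
    have h3 : ∀ u : Multiset ℕ, Multiset.map (flipO ∘ flipO) (oddsM u) = oddsM u := by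
      intro u
      have h4 : Multiset.map (flipO ∘ flipO) (oddsM u) = Multiset.map id (oddsM u) :=
        Multiset.map_congr rfl (fun x hx => flip_flip (mem_odds hx).2)
      rw [h4, Multiset.map_id]
    rwa [h3, h3] at h2
  -- evens agree
  have hevens : evensM s = evensM t := by
    have h1 : ((evensM s).erase (evensM s).sup).cons ((evensM s).sup + 2 * dM s)
        = ((evensM t).erase (evensM t).sup).cons ((evensM t).sup + 2 * dM t) := by
      rw [← TM_evens, ← TM_evens, heq]
    -- sup of both sides
    have supform : ∀ (d : ℕ) (u : Multiset ℕ),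
        ((u.erase u.sup).cons (u.sup + 2 * d)).sup = u.sup + 2 * d := by
      intro d u
      rw [Multiset.sup_cons]
      have h2 : (u.erase u.sup).sup ≤ u.sup := by
        apply Multiset.sup_le.mpr
        intro b hb
        exact Multiset.le_sup (Multiset.mem_of_mem_erase hb)
      have : (u.erase u.sup).sup ≤ u.sup + 2 * d := le_trans h2 (Nat.le_add_right _ _)
      exact sup_eq_left.mpr this
    have hsup : (evensM s).sup + 2 * dM s = (evensM t).sup + 2 * dM t := by
      have := congrArg Multiset.sup h1
      rwa [supform, supform] at this
    have hsups : (evensM s).sup = (evensM t).sup := by omega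
    rw [hsups, hd] at h1
    have herase : (evensM s).erase (evensM t).sup = (evensM t).erase (evensM t).sup :=
      (Multiset.cons_inj_right _).mp h1
    rcases eq_or_ne (evensM s) 0 with h0s | h0s
    · -- then sup evensM t = 0, so evensM t = 0
      have : (evensM t).sup = 0 := by rw [← hsups, h0s]; rfl
      rcases eq_or_ne (evensM t) 0 with h0t | h0t
      · rw [h0s, h0t]
      · exact absurd ((mem_evens (this ▸ sup_mem h0t)).1) ht0
    · rcases eq_or_ne (evensM t) 0 with h0t | h0t
      · have : (evensM s).sup = 0 := by rw [hsups, h0t]; rfl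
        exact absurd ((mem_evens (this ▸ sup_mem h0s)).1) hs0
      · have hms : (evensM t).sup ∈ evensM s := hsups ▸ sup_mem h0s
        have hmt : (evensM t).sup ∈ evensM t := sup_mem h0t
        calc evensM s = ((evensM t).sup) ::ₘ (evensM s).erase (evensM t).sup :=
              (Multiset.cons_erase hms).symm
          _ = ((evensM t).sup) ::ₘ (evensM t).erase (evensM t).sup := by rw [herase]
          _ = evensM t := Multiset.cons_erase hmt
  calc s = oddsM s + evensM s := (Multiset.filter_add_not _ s).symm
    _ = oddsM t + evensM t := by rw [hodds, hevens]
    _ = t := Multiset.filter_add_not _ t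

end DBias

open DBias

/-- For all `n ≥ 0`, the number of partitions of `n` into distinct parts with
more parts `≡ 1 (mod 4)` than parts `≡ 3 (mod 4)` is at least the number of
partitions of `n` into distinct parts with more parts `≡ 3 (mod 4)` than parts
`≡ 1 (mod 4)`. -/
theorem distinct_bias_one_three_mod_four (n : ℕ) :
    (Finset.univ.filter (fun mu : n.Partition => mu.parts.Nodup ∧
        countRes 4 1 mu.parts < countRes 4 3 mu.parts)).card ≤
    (Finset.univ.filter (fun mu : n.Partition => mu.parts.Nodup ∧
        countRes 4 3 mu.parts < countRes 4 1 mu.parts)).card := by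
  classical
  set f : n.Partition → n.Partition := fun mu =>
    if h : mu.parts.Nodup ∧ countRes 4 1 mu.parts < countRes 4 3 mu.parts then
      { parts := TM mu.parts
        parts_pos := fun {i} hi => by
          have h0 : (0 : ℕ) ∉ mu.parts := fun hc => absurd (mu.parts_pos hc) (lt_irrefl 0)
          have := TM_pos mu.parts h0 h.2
          rcases Nat.eq_zero_or_pos i with rfl | hp
          · exact absurd hi this
          · exact hp
        parts_sum := by
          have h0 : (0 : ℕ) ∉ mu.parts := fun hc => absurd (mu.parts_pos hc) (lt_irrefl 0)
          rw [TM_sum mu.parts h0 h.2, mu.parts_sum] }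
    else mu
  apply Finset.card_le_card_of_injOn f
  · intro mu hmu
    rw [Finset.mem_coe, Finset.mem_filter] at hmu ⊢
    obtain ⟨-, hnd, hlt⟩ := hmu
    refine ⟨Finset.mem_univ _, ?_⟩
    simp only [f, dif_pos (And.intro hnd hlt)]
    exact ⟨TM_nodup mu.parts hnd hlt, by rw [TM_count3, TM_count1]; exact hlt⟩
  · intro mu hmu nu hnu heq
    simp only [Finset.coe_filter, Set.mem_setOf_eq, Finset.mem_univ, true_and] at hmu hnu
    obtain ⟨hnds, hlts⟩ := hmu
    obtain ⟨hndt, hltt⟩ := hnu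
    have h0s : (0 : ℕ) ∉ mu.parts := fun hc => absurd (mu.parts_pos hc) (lt_irrefl 0)
    have h0t : (0 : ℕ) ∉ nu.parts := fun hc => absurd (nu.parts_pos hc) (lt_irrefl 0)
    have hparts : TM mu.parts = TM nu.parts := by
      have h := congrArg Nat.Partition.parts heq
      simp only [f] at h
      rw [dif_pos (And.intro hnds hlts), dif_pos (And.intro hndt hltt)] at h
      exact h
    have := TM_inj mu.parts nu.parts hnds hndt h0s h0t hlts hltt hparts
    exact Nat.Partition.ext this
end
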